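/- arXiv:1506.07725 — 2 statements merged into one kernel-verified Lean document; each statement's English description precedes it below -/
import Mathlib

section
/- Let s ∈ ℤ/2 be assigned to cells by s(P^j_a) = a_1 + ⋯ + a_{j−1} and s(M^j_a) = a_1 + ⋯ + a_{j−1} + 1 (mod 2), and let f be the frame assignment f(E^j_a, E^i_a) = (a_1+⋯+a_{j−1}+ε_j)(ε_j + a_j + ⋯ + a_{i−1} + ε_i) (mod 2), where ε = 1 for an M-cell and ε = 0 for a P-cell, for j < i. Then for any triple of 1-cells E^k_a, E^j_a, E^i_a with k < j < i, the coboundary satisfies δf(E^k_a, E^j_a, E^i_a) = s(E^k_a) + s(E^j_a) + s(E^i_a) (mod 2), where δf(τ) denotes the alternating sum (mod 2) of f over the six 2-dimensional faces of the 3-cell τ: (E^j_{a^k},E^i_{a^k}) + (E^j_a,E^i_a) + (E^k_{a^j},E^i_{a^j}) + (E^k_a,E^i_a) + (E^k_{a^i},E^j_{a^i}) + (E^k_a,E^j_a), with a^l = a + e_l. -/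
open Finset

/-- The sign assignment: `s(E^l_a) = a_1 + ⋯ + a_{l-1} + ε` (mod 2), where
`ε = 0` for a `P`-cell and `ε = 1` for an `M`-cell. -/
def signAssign {m : ℕ} (a : Fin m → ℤ) (l : Fin m) (ε : ZMod 2) : ZMod 2 :=
  (∑ t ∈ univ.filter (fun t => t < l), (a t : ZMod 2)) + ε

/-- The frame assignment on a product 2-cell `(E^j_a, E^i_a)` (`j < i`):
`f(E^j_a, E^i_a) = (a_1+⋯+a_{j−1}+ε_j)(ε_j + a_j + ⋯ + a_{i−1} + ε_i)` (mod 2). -/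
def frameAssign {m : ℕ} (a : Fin m → ℤ) (j i : Fin m) (εj εi : ZMod 2) : ZMod 2 :=
  ((∑ t ∈ univ.filter (fun t => t < j), (a t : ZMod 2)) + εj) *
    (εj + (∑ t ∈ univ.filter (fun t => j ≤ t ∧ t < i), (a t : ZMod 2)) + εi)

/-- The shifted base point `a^l = a + e_l`. -/
def shiftBase {m : ℕ} (a : Fin m → ℤ) (l : Fin m) : Fin m → ℤ :=
  fun t => a t + (if t = l then 1 else 0)

lemma sum_shift {m : ℕ} (a : Fin m → ℤ) (l : Fin m) (p : Fin m → Prop)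
    [DecidablePred p] :
    ∑ t ∈ univ.filter p, ((shiftBase a l t : ℤ) : ZMod 2) =
      (∑ t ∈ univ.filter p, (a t : ZMod 2)) + (if p l then 1 else 0) := by
  simp only [shiftBase]
  push_cast
  rw [Finset.sum_add_distrib]
  congr 1
  rw [Finset.sum_ite_eq' (univ.filter p) l (fun _ => (1 : ZMod 2))]
  simp

lemma sum_split {m : ℕ} (a : Fin m → ℤ) (j i : Fin m) (hji : j < i) :
    ∑ t ∈ univ.filter (fun t => t < i), (a t : ZMod 2) =
      (∑ t ∈ univ.filter (fun t => t < j), (a t : ZMod 2)) +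
        ∑ t ∈ univ.filter (fun t => j ≤ t ∧ t < i), (a t : ZMod 2) := by
  rw [← Finset.sum_filter_add_sum_filter_not (univ.filter (fun t => t < i))
    (fun t => t < j)]
  congr 1
  · congr 1
    ext t
    simp only [Finset.mem_filter, Finset.mem_univ, true_and]
    constructor
    · rintro ⟨_, h⟩; exact h
    · intro h; exact ⟨h.trans hji, h⟩
  · congr 1
    ext t
    simp only [Finset.mem_filter, Finset.mem_univ, true_and, not_lt]
    tauto

/-- for any triple of 1-cells `E^k_a, E^j_a, E^i_a` with
`k < j < i` (with `ε = 1` for an `M`-cell and `ε = 0` for a `P`-cell), the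
coboundary of the frame assignment over the six 2-dimensional faces
`(E^j_{a^k},E^i_{a^k}) + (E^j_a,E^i_a) + (E^k_{a^j},E^i_{a^j}) + (E^k_a,E^i_a)
 + (E^k_{a^i},E^j_{a^i}) + (E^k_a,E^j_a)` of the 3-cell `(E^k_a,E^j_a,E^i_a)`
equals `s(E^k_a) + s(E^j_a) + s(E^i_a)` in `ℤ/2`. -/
theorem coboundary_of_frame_assignment {m : ℕ} (a : Fin m → ℤ)
    (k j i : Fin m) (hkj : k < j) (hji : j < i) (εk εj εi : ZMod 2) :
    frameAssign (shiftBase a k) j i εj εi + frameAssign a j i εj εi +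
      frameAssign (shiftBase a j) k i εk εi + frameAssign a k i εk εi +
      frameAssign (shiftBase a i) k j εk εj + frameAssign a k j εk εj =
    signAssign a k εk + signAssign a j εj + signAssign a i εi := by
  have hki : k < i := hkj.trans hji
  simp only [frameAssign, signAssign, sum_shift]
  have h1 : (k < j) = True := eq_true hkj
  have h2 : (j ≤ k ∧ k < i) = False := eq_false (fun h => absurd h.1 hkj.not_ge)
  have h3 : (j < k) = False := eq_false (not_lt.mpr hkj.le)
  have h4 : (k ≤ j ∧ j < i) = True := eq_true ⟨hkj.le, hji⟩
  have h5 : (i < k) = False := eq_false (not_lt.mpr hki.le)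
  have h6 : (k ≤ i ∧ i < j) = False := eq_false (fun h => absurd h.2 (lt_asymm hji))
  simp only [h1, h2, h3, h4, h5, h6, if_true, if_false]
  rw [sum_split a j i hji]
  generalize (∑ t ∈ univ.filter (fun t => t < k), (a t : ZMod 2)) = S1
  generalize (∑ t ∈ univ.filter (fun t => t < j), (a t : ZMod 2)) = S2
  generalize (∑ t ∈ univ.filter (fun t => k ≤ t ∧ t < j), (a t : ZMod 2)) = Tkj
  generalize (∑ t ∈ univ.filter (fun t => j ≤ t ∧ t < i), (a t : ZMod 2)) = Tji
  generalize (∑ t ∈ univ.filter (fun t => k ≤ t ∧ t < i), (a t : ZMod 2)) = Tki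
  revert S1 S2 Tkj Tji Tki εk εj εi
  decide
end

section
/- Let X_r (for an integer r > 0 and n ≥ 2) be the CW complex with 0-cells 0, 1, …, r; 1-cells P from 0 to 1, P_i and M_i from 2i−1 to 2i for 1 ≤ i ≤ ⌊r/2⌋, and P_{i,0}, …, P_{i,n−1} from 2i to 2i+1 for 1 ≤ i ≤ ⌊(r−1)/2⌋; 2-cells Ñ_0 with ∂Ñ_0 = P_1 − M_1, N_{i,j} with ∂N_{i,j} = P_i + P_{i,j} − P_{i,j+1} − M_i and Ñ_{i,j} with ∂Ñ_{i,j} = P_{i,j} + P_{i+1} − M_{i+1} − P_{i,j+1} for 1 ≤ i ≤ ⌊(r−1)/2⌋ and 0 ≤ j ≤ n−2; and 3-cells Q_{i,j} with ∂Q_{i,j} = N_{i,j} + Ñ_{i,j+1} − Ñ_{i,j} − N_{i,j+1} for 0 ≤ j ≤ n−3. Then X_r is contractible. In particular, its cellular chain complex over ℤ has the homology of a point. -/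
/-!
STATEMENT 13: the CW complex `X_r` associated to the partial sock flow
category `S̃ⁿ_r` (for integers `r > 0`, `n ≥ 2`) is contractible.  Following the
given reduction, we formalize this at the chain level: the cellular chain
complex over `ℤ`, with cells and boundary maps exactly as listed, has the
homology of a point.

Cells (writing `m₁ = ⌊r/2⌋`, `m₂ = ⌊(r-1)/2⌋`, and `m₃ = ⌊r/2⌋ - 1` for the
range of indices `i` for which the cells `Ñ_{i,j}` and `Q_{i,j}`, whose
boundaries involve `P_{i+1}`, `M_{i+1}`, exist):
* 0-cells `0, 1, …, r`;
* 1-cells `P` (from 0 to 1), `P_i, M_i` (from `2i−1` to `2i`, `1 ≤ i ≤ m₁`),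
  `P_{i,0}, …, P_{i,n−1}` (from `2i` to `2i+1`, `1 ≤ i ≤ m₂`);
* 2-cells `Ñ_0` with `∂Ñ_0 = P_1 − M_1`; `N_{i,j}` (`1 ≤ i ≤ m₂`,
  `0 ≤ j ≤ n−2`) with `∂N_{i,j} = P_i + P_{i,j} − P_{i,j+1} − M_i`; and
  `Ñ_{i,j}` with `∂Ñ_{i,j} = P_{i,j} + P_{i+1} − M_{i+1} − P_{i,j+1}`;
* 3-cells `Q_{i,j}` (`0 ≤ j ≤ n−3`) with
  `∂Q_{i,j} = N_{i,j} + Ñ_{i,j+1} − Ñ_{i,j} − N_{i,j+1}`.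
-/

/-- 0-cells. -/
abbrev SockC0 (r : ℕ) := Fin (r + 1)

/-- 1-cells: `P`, then `P_i`/`M_i` (`Bool`: `true` = `P`), then `P_{i,j}`. -/
abbrev SockC1 (r n : ℕ) := Unit ⊕ ((Fin (r / 2) × Bool) ⊕ (Fin ((r - 1) / 2) × Fin n))

/-- 2-cells: `Ñ_0`, then `N_{i,j}`, then `Ñ_{i,j}`. -/
abbrev SockC2 (r n : ℕ) :=
  PLift (1 ≤ r / 2) ⊕ ((Fin ((r - 1) / 2) × Fin (n - 1)) ⊕ (Fin (r / 2 - 1) × Fin (n - 1)))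

/-- 3-cells: `Q_{i,j}`. -/
abbrev SockC3 (r n : ℕ) := Fin (r / 2 - 1) × Fin (n - 2)

/-- Boundary of the 1-cells. -/
noncomputable def sockD1 (r n : ℕ) (hr : 1 ≤ r) : SockC1 r n → (SockC0 r →₀ ℤ) := fun c =>
  match c with
  | .inl _ => Finsupp.single ⟨1, by omega⟩ 1 - Finsupp.single ⟨0, by omega⟩ 1
  | .inr (.inl (i, _)) =>
      Finsupp.single ⟨2 * i.val + 2, by have := i.isLt; omega⟩ 1 -
        Finsupp.single ⟨2 * i.val + 1, by have := i.isLt; omega⟩ 1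
  | .inr (.inr (i, _)) =>
      Finsupp.single ⟨2 * i.val + 3, by have := i.isLt; omega⟩ 1 -
        Finsupp.single ⟨2 * i.val + 2, by have := i.isLt; omega⟩ 1

/-- Boundary of the 2-cells. -/
noncomputable def sockD2 (r n : ℕ) (hn : 2 ≤ n) : SockC2 r n → (SockC1 r n →₀ ℤ) := fun c =>
  match c with
  | .inl h =>
      Finsupp.single (.inr (.inl (⟨0, h.down⟩, true))) 1 -
        Finsupp.single (.inr (.inl (⟨0, h.down⟩, false))) 1
  | .inr (.inl (i, j)) =>  -- N_{i,j}
      Finsupp.single (.inr (.inl (⟨i.val, by have := i.isLt; omega⟩, true))) 1 +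
        Finsupp.single (.inr (.inr (i, ⟨j.val, by have := j.isLt; omega⟩))) 1 -
        Finsupp.single (.inr (.inr (i, ⟨j.val + 1, by have := j.isLt; omega⟩))) 1 -
        Finsupp.single (.inr (.inl (⟨i.val, by have := i.isLt; omega⟩, false))) 1
  | .inr (.inr (i, j)) =>  -- Ñ_{i,j}
      Finsupp.single (.inr (.inr (⟨i.val, by have := i.isLt; omega⟩,
          ⟨j.val, by have := j.isLt; omega⟩))) 1 +
        Finsupp.single (.inr (.inl (⟨i.val + 1, by have := i.isLt; omega⟩, true))) 1 -
        Finsupp.single (.inr (.inl (⟨i.val + 1, by have := i.isLt; omega⟩, false))) 1 -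
        Finsupp.single (.inr (.inr (⟨i.val, by have := i.isLt; omega⟩,
          ⟨j.val + 1, by have := j.isLt; omega⟩))) 1

/-- Boundary of the 3-cells. -/
noncomputable def sockD3 (r n : ℕ) (hn : 2 ≤ n) : SockC3 r n → (SockC2 r n →₀ ℤ) := fun c =>
  match c with
  | (i, j) =>
      Finsupp.single (.inr (.inl (⟨i.val, by have := i.isLt; omega⟩,
          ⟨j.val, by have := j.isLt; omega⟩))) 1 +
        Finsupp.single (.inr (.inr (i, ⟨j.val + 1, by have := j.isLt; omega⟩))) 1 -
        Finsupp.single (.inr (.inr (i, ⟨j.val, by have := j.isLt; omega⟩))) 1 -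
        Finsupp.single (.inr (.inl (⟨i.val, by have := i.isLt; omega⟩,
          ⟨j.val + 1, by have := j.isLt; omega⟩))) 1

/-!
The augmented complex `C₃ → C₂ → C₁ → C₀ → ℤ` has an explicit contracting homotopy `s`, i.e.
`∂ s + s ∂ = id`, so it is exact. On a vertex, `s` is the path to it from `0` along
`P, P_1, P_{1,0}, P_2, P_{2,0}, …`. On edges, `s` kills `P` and `P_i`, sends `M_i` to a filler
`F_i` of the loop `M_i − P_i` (namely `−Ñ_0` plus the squares `N_{k,0} − Ñ_{k,0}`, `1 ≤ k < i`),
and sends `P_{i,j}` to `−(N_{i,0} + ⋯ + N_{i,j−1}) − j F_i`. On 2-cells, `s` sends `Ñ_{i,j}` to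
`Q_{i,0} + ⋯ + Q_{i,j−1}` and kills the rest. In degree 3, `s ∂ = id` makes `∂` injective.
The encoding indexes cells from `0`, so its `i` is the paper's `i − 1`.
-/

section ContractingHomotopy

open LinearMap

variable {R A C₀ C₁ C₂ : Type*} [Ring R] [AddCommGroup A] [AddCommGroup C₀] [AddCommGroup C₁]
  [AddCommGroup C₂] [Module R A] [Module R C₀] [Module R C₁] [Module R C₂]

theorem LinearMap.ker_le_range_of_homotopy {f : C₀ →ₗ[R] C₁} {g : C₁ →ₗ[R] C₂}
    (s : C₁ →ₗ[R] C₀) (t : C₂ →ₗ[R] C₁) (h : f ∘ₗ s + t ∘ₗ g = LinearMap.id) : ker g ≤ range f := by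
  intro x hx
  refine ⟨s x, ?_⟩
  simpa [mem_ker.mp hx] using LinearMap.congr_fun h x

theorem subsingleton_homology_of_ker_le_range {f : C₀ →ₗ[R] C₁} {g : C₁ →ₗ[R] C₂}
    (h : ker g ≤ range f) : Subsingleton (ker g ⧸ (range f).comap (ker g).subtype) := by
  rwa [Submodule.Quotient.subsingleton_iff, Submodule.comap_subtype_eq_top]

theorem nonempty_quotient_range_equiv_of_homotopy {d : C₁ →ₗ[R] C₀} {ε : C₀ →ₗ[R] A}
    (η : A →ₗ[R] C₀) (s : C₀ →ₗ[R] C₁) (hεd : ε ∘ₗ d = 0) (hεη : ε ∘ₗ η = LinearMap.id)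
    (h : d ∘ₗ s + η ∘ₗ ε = LinearMap.id) : Nonempty ((C₀ ⧸ range d) ≃ₗ[R] A) := by
  have hrange : range d = ker ε :=
    le_antisymm (range_le_ker_iff.mpr hεd) (ker_le_range_of_homotopy s η h)
  have hsurj : Function.Surjective ε := fun a => ⟨η a, LinearMap.congr_fun hεη a⟩
  exact ⟨(Submodule.quotEquivOfEq _ _ hrange).trans (ε.quotKerEquivOfSurjective hsurj)⟩

end ContractingHomotopy

namespace SockComplex

open Finsupp

variable {r n : ℕ}

noncomputable abbrev d₁ (r n : ℕ) (hr : 1 ≤ r) := linearCombination ℤ (sockD1 r n hr)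
noncomputable abbrev d₂ (r n : ℕ) (hn : 2 ≤ n) := linearCombination ℤ (sockD2 r n hn)
noncomputable abbrev d₃ (r n : ℕ) (hn : 2 ≤ n) := linearCombination ℤ (sockD3 r n hn)

noncomputable def augmentation (r : ℕ) : (SockC0 r →₀ ℤ) →ₗ[ℤ] ℤ :=
  linearCombination ℤ fun _ => 1

noncomputable def basepoint (r : ℕ) : ℤ →ₗ[ℤ] (SockC0 r →₀ ℤ) :=
  lsingle ⟨0, r.succ_pos⟩

theorem d₁_comp_d₂ (hr : 1 ≤ r) (hn : 2 ≤ n) : d₁ r n hr ∘ₗ d₂ r n hn = 0 := by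
  ext c : 2
  rcases c with h | ⟨i, j⟩ | ⟨i, j⟩ <;>
    simp only [LinearMap.comp_apply, lsingle_apply, LinearMap.zero_apply, sockD2, map_add,
      map_sub, linearCombination_single, one_smul, sockD1] <;> abel

theorem d₂_comp_d₃ (hn : 2 ≤ n) : d₂ r n hn ∘ₗ d₃ r n hn = 0 := by
  ext ⟨i, j⟩ : 2
  simp only [LinearMap.comp_apply, lsingle_apply, LinearMap.zero_apply, sockD3, map_add,
    map_sub, linearCombination_single, one_smul, sockD2]
  abel

theorem augmentation_comp_d₁ (hr : 1 ≤ r) : augmentation r ∘ₗ d₁ r n hr = 0 := by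
  ext c : 2
  rcases c with _ | ⟨i, b⟩ | ⟨i, j⟩ <;> simp [augmentation, sockD1]

theorem augmentation_comp_basepoint : augmentation r ∘ₗ basepoint r = LinearMap.id := by
  ext
  simp [augmentation, basepoint]


noncomputable def pathEdge (r n : ℕ) : ℕ → (SockC1 r n →₀ ℤ)
  | 0 => single (.inl ()) 1
  | k + 1 =>
    if k % 2 = 0 then
      if h : k / 2 < r / 2 then single (.inr (.inl (⟨k / 2, h⟩, true))) 1 else 0
    else
      if h : k / 2 < (r - 1) / 2 ∧ 0 < n then
        single (.inr (.inr (⟨k / 2, h.1⟩, ⟨0, h.2⟩))) 1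
      else 0

noncomputable def pathTo (r n k : ℕ) : SockC1 r n →₀ ℤ :=
  ∑ m ∈ Finset.range k, pathEdge r n m

theorem pathTo_succ (k : ℕ) : pathTo r n (k + 1) = pathTo r n k + pathEdge r n k :=
  Finset.sum_range_succ _ _

theorem pathEdge_odd (i : ℕ) (hi : i < r / 2) :
    pathEdge r n (2 * i + 1) = single (.inr (.inl (⟨i, hi⟩, true))) 1 := by
  simp only [pathEdge, Nat.mul_mod_right, Nat.mul_div_cancel_left i two_pos, if_true, dif_pos hi]

theorem pathEdge_even (hn : 0 < n) (i : ℕ) (hi : i < (r - 1) / 2) :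
    pathEdge r n (2 * i + 2) = single (.inr (.inr (⟨i, hi⟩, ⟨0, by omega⟩))) 1 := by
  have hodd : (2 * i + 1) % 2 ≠ 0 := by omega
  have hhalf : (2 * i + 1) / 2 = i := by omega
  simp only [pathEdge, hodd, hhalf, if_false, dif_pos (And.intro hi hn)]

theorem d₁_pathEdge (hr : 1 ≤ r) (hn : 0 < n) (k : ℕ) (hk : k < r) :
    d₁ r n hr (pathEdge r n k) =
      single ⟨k + 1, by omega⟩ 1 - single ⟨k, by omega⟩ 1 := by
  match k with
  | 0 => simp [pathEdge, sockD1]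
  | k + 1 =>
    obtain ⟨i, rfl | rfl⟩ := Nat.even_or_odd' k
    · rw [pathEdge_odd i (by omega), linearCombination_single, one_smul, sockD1]
    · rw [pathEdge_even hn i (by omega), linearCombination_single, one_smul, sockD1]

theorem d₁_pathTo (hr : 1 ≤ r) (hn : 0 < n) (k : ℕ) (hk : k ≤ r) :
    d₁ r n hr (pathTo r n k) =
      single ⟨k, by omega⟩ 1 - single ⟨0, by omega⟩ 1 := by
  induction k with
  | zero => simp [pathTo]
  | succ k ih =>
    rw [pathTo_succ, map_add, ih (by omega),
      d₁_pathEdge hr hn k (by omega)]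
    abel

noncomputable def loopFiller (r n : ℕ) (hn : 2 ≤ n) : ℕ → (SockC2 r n →₀ ℤ)
  | 0 => if h : 1 ≤ r / 2 then -single (.inl ⟨h⟩) 1 else 0
  | i + 1 =>
    loopFiller r n hn i +
      if h : i + 1 < r / 2 then
        single (.inr (.inl (⟨i, by omega⟩, ⟨0, by omega⟩))) 1 -
          single (.inr (.inr (⟨i, by omega⟩, ⟨0, by omega⟩))) 1
      else 0

theorem loopFiller_succ (hn : 2 ≤ n) (i : ℕ) (hi : i + 1 < r / 2) :
    loopFiller r n hn (i + 1) = loopFiller r n hn i +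
      (single (.inr (.inl (⟨i, by omega⟩, ⟨0, by omega⟩))) 1 -
        single (.inr (.inr (⟨i, by omega⟩, ⟨0, by omega⟩))) 1) := by
  rw [loopFiller, dif_pos hi]

theorem d₂_loopFiller (hn : 2 ≤ n) (i : ℕ) (hi : i < r / 2) :
    d₂ r n hn (loopFiller r n hn i) =
      single (.inr (.inl (⟨i, hi⟩, false))) 1 - single (.inr (.inl (⟨i, hi⟩, true))) 1 := by
  induction i with
  | zero =>
    rw [loopFiller, dif_pos (by omega)]
    simp only [map_neg, linearCombination_single, one_smul, sockD2]
    abel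
  | succ i ih =>
    rw [loopFiller_succ hn i hi, map_add, ih (by omega), map_sub, linearCombination_single,
      linearCombination_single, one_smul, one_smul]
    simp only [sockD2]
    abel

noncomputable def nStrip (r n : ℕ) (i : Fin ((r - 1) / 2)) : ℕ → (SockC2 r n →₀ ℤ)
  | 0 => 0
  | j + 1 => nStrip r n i j + if h : j < n - 1 then single (.inr (.inl (i, ⟨j, h⟩))) 1 else 0

theorem nStrip_succ (i : Fin ((r - 1) / 2)) (j : ℕ) (hj : j < n - 1) :
    nStrip r n i (j + 1) = nStrip r n i j + single (.inr (.inl (i, ⟨j, hj⟩))) 1 := by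
  rw [nStrip, dif_pos hj]

theorem d₂_nStrip (hn : 2 ≤ n) (i : Fin ((r - 1) / 2)) (j : ℕ) (hj : j ≤ n - 1) :
    d₂ r n hn (nStrip r n i j) =
      (j : ℤ) • (single (.inr (.inl (⟨i, by omega⟩, true))) 1 -
          single (.inr (.inl (⟨i, by omega⟩, false))) 1) +
        single (.inr (.inr (i, ⟨0, by omega⟩))) 1 - single (.inr (.inr (i, ⟨j, by omega⟩))) 1 := by
  induction j with
  | zero => simp [nStrip]
  | succ j ih =>
    rw [nStrip_succ i j (by omega), map_add, ih (by omega), linearCombination_single, one_smul]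
    simp only [sockD2]
    push_cast
    rw [add_smul, one_smul]
    abel

noncomputable def qStrip (r n : ℕ) (i : Fin (r / 2 - 1)) : ℕ → (SockC3 r n →₀ ℤ)
  | 0 => 0
  | j + 1 => qStrip r n i j + if h : j < n - 2 then single (i, ⟨j, h⟩) 1 else 0

theorem qStrip_succ (i : Fin (r / 2 - 1)) (j : ℕ) (hj : j < n - 2) :
    qStrip r n i (j + 1) = qStrip r n i j + single (i, ⟨j, hj⟩) 1 := by
  rw [qStrip, dif_pos hj]

theorem d₃_qStrip (hn : 2 ≤ n) (i : Fin (r / 2 - 1)) (j : ℕ) (hj : j ≤ n - 2) :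
    d₃ r n hn (qStrip r n i j) =
      single (.inr (.inl (⟨i, by omega⟩, ⟨0, by omega⟩))) 1 -
        single (.inr (.inl (⟨i, by omega⟩, ⟨j, by omega⟩))) 1 +
        single (.inr (.inr (i, ⟨j, by omega⟩))) 1 - single (.inr (.inr (i, ⟨0, by omega⟩))) 1 := by
  induction j with
  | zero => simp [qStrip]
  | succ j ih =>
    rw [qStrip_succ i j (by omega), map_add, ih (by omega), linearCombination_single, one_smul]
    simp only [sockD3]
    abel

noncomputable def s₀ (r n : ℕ) : (SockC0 r →₀ ℤ) →ₗ[ℤ] (SockC1 r n →₀ ℤ) :=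
  linearCombination ℤ fun v => pathTo r n v

noncomputable def s₁ (r n : ℕ) (hn : 2 ≤ n) : (SockC1 r n →₀ ℤ) →ₗ[ℤ] (SockC2 r n →₀ ℤ) :=
  linearCombination ℤ fun
    | .inl _ => 0
    | .inr (.inl (_, true)) => 0
    | .inr (.inl (i, false)) => loopFiller r n hn i
    | .inr (.inr (i, j)) => -nStrip r n i j - (j : ℤ) • loopFiller r n hn i

noncomputable def s₂ (r n : ℕ) : (SockC2 r n →₀ ℤ) →ₗ[ℤ] (SockC3 r n →₀ ℤ) :=
  linearCombination ℤ fun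
    | .inr (.inr (i, j)) => qStrip r n i j
    | _ => 0

theorem d₁_comp_s₀_add (hr : 1 ≤ r) (hn : 0 < n) :
    d₁ r n hr ∘ₗ s₀ r n + basepoint r ∘ₗ augmentation r = LinearMap.id := by
  ext v : 2
  simp [s₀, augmentation, basepoint, d₁_pathTo hr hn v v.is_le]

theorem s₀_single_succ_sub_single (k : ℕ) (hk : k < r) :
    s₀ r n (single ⟨k + 1, by omega⟩ 1 - single ⟨k, by omega⟩ 1) = pathEdge r n k := by
  simp [s₀, pathTo_succ]

theorem d₂_comp_s₁_add (hr : 1 ≤ r) (hn : 2 ≤ n) :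
    d₂ r n hn ∘ₗ s₁ r n hn + s₀ r n ∘ₗ d₁ r n hr = LinearMap.id := by
  ext c : 2
  simp only [LinearMap.comp_apply, LinearMap.add_apply, lsingle_apply, LinearMap.id_apply, d₁,
    linearCombination_single, one_smul]
  rcases c with _ | ⟨i, _ | _⟩ | ⟨i, j⟩
  · rw [sockD1, s₀_single_succ_sub_single 0 hr]
    simp [s₁, pathEdge]
  · rw [sockD1, s₀_single_succ_sub_single (2 * i + 1) (by omega), pathEdge_odd i i.isLt]
    simp only [s₁, linearCombination_single, one_smul, d₂_loopFiller hn i i.isLt]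
    abel
  · rw [sockD1, s₀_single_succ_sub_single (2 * i + 1) (by omega), pathEdge_odd i i.isLt]
    simp [s₁]
  · rw [sockD1, s₀_single_succ_sub_single (2 * i + 2) (by omega), pathEdge_even (by omega) i i.isLt]
    simp only [s₁, linearCombination_single, one_smul, map_sub, map_neg, map_smul,
      d₂_nStrip hn i j (by omega), d₂_loopFiller (r := r) hn i (by omega), smul_sub]
    abel

theorem d₃_comp_s₂_add (hn : 2 ≤ n) :
    d₃ r n hn ∘ₗ s₂ r n + s₁ r n hn ∘ₗ d₂ r n hn = LinearMap.id := by
  ext c : 2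
  simp only [LinearMap.comp_apply, LinearMap.add_apply, lsingle_apply, LinearMap.id_apply, d₂,
    linearCombination_single, one_smul]
  rcases c with h | ⟨i, j⟩ | ⟨i, j⟩
  · simp only [s₂, sockD2, map_zero, map_sub, s₁, linearCombination_single, one_smul, loopFiller,
      dif_pos h.down]
    abel
  · simp only [s₂, sockD2, map_zero, map_add, map_sub, s₁, linearCombination_single, one_smul,
      nStrip_succ (n := n) i j (by omega)]
    push_cast
    rw [add_smul, one_smul]
    abel
  · simp only [s₂, sockD2, map_add, map_sub, s₁, linearCombination_single, one_smul,
      d₃_qStrip hn i j (by omega), loopFiller_succ (r := r) hn i (by omega),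
      nStrip_succ (r := r) (n := n) ⟨i, by omega⟩ j (by omega)]
    push_cast
    rw [add_smul, one_smul]
    abel

theorem s₂_comp_d₃ (hn : 2 ≤ n) : s₂ r n ∘ₗ d₃ r n hn = LinearMap.id := by
  ext ⟨i, j⟩ : 2
  simp only [LinearMap.comp_apply, lsingle_apply, LinearMap.id_apply, sockD3, map_add,
    map_sub, linearCombination_single, one_smul, s₂, qStrip_succ i j j.isLt]
  abel

end SockComplex

/-- The cellular chain complex of `X_r` over `ℤ` has the homology of a point:
`H_0 ≅ ℤ` and `H_1 = H_2 = H_3 = 0` (the complex is concentrated in degrees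
`≤ 3`, so this says `H_k = 0` for all `k > 0`). -/
theorem sock_complex_contractible (r n : ℕ) (hr : 1 ≤ r) (hn : 2 ≤ n) :
    (∀ v, Finsupp.linearCombination ℤ (sockD1 r n hr)
        (Finsupp.linearCombination ℤ (sockD2 r n hn) v) = 0) ∧
    (∀ v, Finsupp.linearCombination ℤ (sockD2 r n hn)
        (Finsupp.linearCombination ℤ (sockD3 r n hn) v) = 0) ∧
    Nonempty (((SockC0 r →₀ ℤ) ⧸
        LinearMap.range (Finsupp.linearCombination ℤ (sockD1 r n hr))) ≃ₗ[ℤ] ℤ) ∧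
    Subsingleton ((LinearMap.ker (Finsupp.linearCombination ℤ (sockD1 r n hr))) ⧸
        (LinearMap.range (Finsupp.linearCombination ℤ (sockD2 r n hn))).comap
          (LinearMap.ker (Finsupp.linearCombination ℤ (sockD1 r n hr))).subtype) ∧
    Subsingleton ((LinearMap.ker (Finsupp.linearCombination ℤ (sockD2 r n hn))) ⧸
        (LinearMap.range (Finsupp.linearCombination ℤ (sockD3 r n hn))).comap
          (LinearMap.ker (Finsupp.linearCombination ℤ (sockD2 r n hn))).subtype) ∧
    Subsingleton (LinearMap.ker (Finsupp.linearCombination ℤ (sockD3 r n hn))) := by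
  refine ⟨LinearMap.congr_fun (SockComplex.d₁_comp_d₂ hr hn),
    LinearMap.congr_fun (SockComplex.d₂_comp_d₃ hn), ?_, ?_, ?_, ?_⟩
  · exact nonempty_quotient_range_equiv_of_homotopy (SockComplex.basepoint r) (SockComplex.s₀ r n)
      (SockComplex.augmentation_comp_d₁ hr) SockComplex.augmentation_comp_basepoint
      (SockComplex.d₁_comp_s₀_add hr (by omega))
  · exact subsingleton_homology_of_ker_le_range
      (LinearMap.ker_le_range_of_homotopy _ _ (SockComplex.d₂_comp_s₁_add hr hn))
  · exact subsingleton_homology_of_ker_le_range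
      (LinearMap.ker_le_range_of_homotopy _ _ (SockComplex.d₃_comp_s₂_add hn))
  · exact Submodule.subsingleton_iff_eq_bot.mpr
      (LinearMap.ker_eq_bot_of_inverse (SockComplex.s₂_comp_d₃ hn))
end
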